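/- arXiv:2206.00127 — 3 statements merged into one kernel-verified Lean document; each statement's English description precedes it below -/
import Mathlib

section
/- Let P₁ and P₂ be probability distributions on a finite index set [m] with total variation distance η < 1, and let X_1, ..., X_m ∈ ℝ^{d×r}. Then ‖E_{P₁}[X] − E_{P₂}[X]‖₂ ≤ (√η / (1 − √η)) · (‖Σ_{P₁}‖₂^{1/2} + ‖Σ_{P₂}‖₂^{1/2}), where Σ_{P_j} = E_{i∼P_j}[(X_i − E_{P_j}X)(X_i − E_{P_j}X)ᵀ]. -/
/-!
Split the signed difference `P₁ - P₂` into its positive and negative parts `R₁ = (P₁ - P₂)⁺ ≤ P₁`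
and `R₂ = (P₁ - P₂)⁻ ≤ P₂`; each has mass `η` (the mass on which an optimal coupling of `P₁` and
`P₂` disagrees). Centering at the means `μⱼ`,
  `∑ R₁ i (X i - μ₁) - ∑ R₂ i (X i - μ₂) = (1 - η) (μ₁ - μ₂)`,
and Cauchy–Schwarz bounds the operator norm of `∑ Rⱼ i (X i - μⱼ)` by `√η ‖Σⱼ‖^{1/2}`. Hence
`(1 - η) ‖μ₁ - μ₂‖ ≤ √η (‖Σ₁‖^{1/2} + ‖Σ₂‖^{1/2})`, and `1 - √η ≤ 1 - η`.
-/

open Matrix Finset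

/-- Spectral (ℓ² → ℓ²) operator norm of a real matrix. -/
noncomputable def spec {d r : ℕ} (M : Matrix (Fin d) (Fin r) ℝ) : ℝ :=
  ‖LinearMap.toContinuousLinearMap (Matrix.toEuclideanLin M)‖

/-- Mean of matrix-valued samples under a discrete distribution `P` on `Fin m`. -/
noncomputable def distMean {m d r : ℕ} (P : Fin m → ℝ)
    (X : Fin m → Matrix (Fin d) (Fin r) ℝ) : Matrix (Fin d) (Fin r) ℝ :=
  ∑ i, P i • X i

/-- Covariance of matrix-valued samples under a discrete distribution `P` on `Fin m`. -/
noncomputable def distCov {m d r : ℕ} (P : Fin m → ℝ)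
    (X : Fin m → Matrix (Fin d) (Fin r) ℝ) : Matrix (Fin d) (Fin d) ℝ :=
  ∑ i, P i • ((X i - distMean P X) * (X i - distMean P X)ᵀ)

open scoped Matrix.Norms.L2Operator InnerProductSpace InnerProduct

lemma spec_eq_l2_opNorm {d r : ℕ} (M : Matrix (Fin d) (Fin r) ℝ) : spec M = ‖M‖ := rfl

lemma norm_sum_smul_sq_le {ι E : Type*} [SeminormedAddCommGroup E] [NormedSpace ℝ E]
    (s : Finset ι) {w : ι → ℝ} (hw : ∀ i ∈ s, 0 ≤ w i) (x : ι → E) :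
    ‖∑ i ∈ s, w i • x i‖ ^ 2 ≤ (∑ i ∈ s, w i) * ∑ i ∈ s, w i * ‖x i‖ ^ 2 := by
  have htri : ‖∑ i ∈ s, w i • x i‖ ≤ ∑ i ∈ s, w i * ‖x i‖ := by
    refine (norm_sum_le _ _).trans_eq (sum_congr rfl fun i hi => ?_)
    rw [norm_smul, Real.norm_of_nonneg (hw i hi)]
  calc ‖∑ i ∈ s, w i • x i‖ ^ 2 ≤ (∑ i ∈ s, w i * ‖x i‖) ^ 2 := by gcongr
    _ ≤ _ := sum_sq_le_sum_mul_sum_of_sq_le_mul s hw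
        (fun i hi => mul_nonneg (hw i hi) (sq_nonneg _)) fun i _ => le_of_eq (by ring)

namespace ContinuousLinearMap

variable {ι E F : Type*} [NormedAddCommGroup E] [InnerProductSpace ℝ E] [CompleteSpace E]
  [NormedAddCommGroup F] [InnerProductSpace ℝ F] [CompleteSpace F]

lemma sum_mul_norm_apply_sq_eq_inner (s : Finset ι) (P : ι → ℝ) (T : ι → E →L[ℝ] F) (x : E) :
    ∑ i ∈ s, P i * ‖T i x‖ ^ 2 = ⟪(∑ i ∈ s, P i • ((T i)† ∘L T i)) x, x⟫_ℝ := by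
  simp only [_root_.sum_apply, _root_.smul_apply, sum_inner, real_inner_smul_left,
    apply_norm_sq_eq_inner_adjoint_left, RCLike.re_to_real]

lemma norm_sum_smul_le_sqrt_mul_sqrt (s : Finset ι) {R P : ι → ℝ}
    (hR : ∀ i ∈ s, 0 ≤ R i) (hRP : ∀ i ∈ s, R i ≤ P i) (T : ι → E →L[ℝ] F) :
    ‖∑ i ∈ s, R i • T i‖ ≤ √(∑ i ∈ s, R i) * √‖∑ i ∈ s, P i • ((T i)† ∘L T i)‖ := by
  set S := ∑ i ∈ s, P i • ((T i)† ∘L T i)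
  refine opNorm_le_bound _ (by positivity) fun x => ?_
  have hS : ⟪S x, x⟫_ℝ ≤ ‖S‖ * ‖x‖ ^ 2 := calc
    ⟪S x, x⟫_ℝ ≤ ‖S x‖ * ‖x‖ := real_inner_le_norm _ _
    _ ≤ ‖S‖ * ‖x‖ * ‖x‖ := by gcongr; exact S.le_opNorm x
    _ = ‖S‖ * ‖x‖ ^ 2 := by ring
  refine le_of_sq_le_sq ?_ (by positivity)
  calc ‖(∑ i ∈ s, R i • T i) x‖ ^ 2 = ‖∑ i ∈ s, R i • T i x‖ ^ 2 := by
        simp only [_root_.sum_apply, _root_.smul_apply]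
    _ ≤ (∑ i ∈ s, R i) * ∑ i ∈ s, R i * ‖T i x‖ ^ 2 := norm_sum_smul_sq_le s hR _
    _ ≤ (∑ i ∈ s, R i) * ∑ i ∈ s, P i * ‖T i x‖ ^ 2 := by
        gcongr with i hi
        · exact sum_nonneg hR
        · exact hRP i hi
    _ = (∑ i ∈ s, R i) * ⟪S x, x⟫_ℝ := by rw [sum_mul_norm_apply_sq_eq_inner]
    _ ≤ (∑ i ∈ s, R i) * (‖S‖ * ‖x‖ ^ 2) := by
        gcongr
        exact sum_nonneg hR
    _ = (√(∑ i ∈ s, R i) * √‖S‖ * ‖x‖) ^ 2 := by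
        rw [mul_pow, mul_pow, Real.sq_sqrt (sum_nonneg hR), Real.sq_sqrt (norm_nonneg _)]; ring

end ContinuousLinearMap

namespace Matrix

variable {ι m n : Type*} [Fintype m] [Fintype n] [DecidableEq m] [DecidableEq n]

lemma toContinuousLinearMap_toEuclideanLin_conjTranspose_mul_self (B : Matrix m n ℝ) :
    (toEuclideanLin (Bᴴ * B)).toContinuousLinearMap =
      (toEuclideanLin B).toContinuousLinearMap† ∘L (toEuclideanLin B).toContinuousLinearMap := by
  rw [← LinearMap.adjoint_toContinuousLinearMap, ← toEuclideanLin_conjTranspose_eq_adjoint]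
  ext x i
  simp [mulVec_mulVec]

lemma l2_opNorm_sum_smul_le_sqrt_mul_sqrt (s : Finset ι) {R P : ι → ℝ}
    (hR : ∀ i ∈ s, 0 ≤ R i) (hRP : ∀ i ∈ s, R i ≤ P i) (A : ι → Matrix m n ℝ) :
    ‖∑ i ∈ s, R i • A i‖ ≤ √(∑ i ∈ s, R i) * √‖∑ i ∈ s, P i • (A i * (A i)ᵀ)‖ := by
  have hAAt : ∀ i, A i * (A i)ᵀ = (A i)ᴴᴴ * (A i)ᴴ := fun i => by
    rw [conjTranspose_conjTranspose, conjTranspose_eq_transpose_of_trivial]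
  rw [← l2_opNorm_conjTranspose, conjTranspose_sum]
  simp only [conjTranspose_smul, star_trivial, hAAt, l2_opNorm_def, map_sum, map_smul,
    LinearEquiv.trans_apply, toContinuousLinearMap_toEuclideanLin_conjTranspose_mul_self]
  exact ContinuousLinearMap.norm_sum_smul_le_sqrt_mul_sqrt s hR hRP _

end Matrix

section TotalVariation

variable {ι : Type*} (s : Finset ι) {P Q : ι → ℝ}

lemma sum_posPart_sub_eq_sum_negPart_sub (h : ∑ i ∈ s, P i = ∑ i ∈ s, Q i) :
    ∑ i ∈ s, (P i - Q i)⁺ = ∑ i ∈ s, (P i - Q i)⁻ := by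
  rw [← sub_eq_zero, ← sum_sub_distrib]
  simp only [posPart_sub_negPart, sum_sub_distrib, h, sub_self]

lemma sum_posPart_sub_eq_half_sum_abs (h : ∑ i ∈ s, P i = ∑ i ∈ s, Q i) :
    ∑ i ∈ s, (P i - Q i)⁺ = 1 / 2 * ∑ i ∈ s, |P i - Q i| := by
  simp only [← posPart_add_negPart, sum_add_distrib, ← sum_posPart_sub_eq_sum_negPart_sub s h]
  ring

lemma sum_posPart_smul_sub_mean_sub_sum_negPart_smul_sub_mean {M : Type*} [AddCommGroup M]
    [Module ℝ M] (h : ∑ i ∈ s, P i = ∑ i ∈ s, Q i) (X : ι → M) :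
    ∑ i ∈ s, (P i - Q i)⁺ • (X i - ∑ j ∈ s, P j • X j)
        - ∑ i ∈ s, (P i - Q i)⁻ • (X i - ∑ j ∈ s, Q j • X j)
      = (1 - ∑ i ∈ s, (P i - Q i)⁺) • (∑ i ∈ s, P i • X i - ∑ i ∈ s, Q i • X i) := by
  have hmass : ∑ i ∈ s, (P i - Q i)⁺ • X i - ∑ i ∈ s, (P i - Q i)⁻ • X i
      = ∑ i ∈ s, P i • X i - ∑ i ∈ s, Q i • X i := by
    simp only [← sum_sub_distrib, ← sub_smul, posPart_sub_negPart]
  simp only [smul_sub, sum_sub_distrib, ← sum_smul, ← sum_posPart_sub_eq_sum_negPart_sub s h]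
  linear_combination (norm := module) hmass

end TotalVariation

lemma posPart_sub_le_left {α : Type*} [AddCommGroup α] [LinearOrder α] [IsOrderedAddMonoid α]
    {a b : α} (ha : 0 ≤ a) (hb : 0 ≤ b) : (a - b)⁺ ≤ a :=
  sup_le (sub_le_self a hb) ha

lemma negPart_sub_le_right {α : Type*} [AddCommGroup α] [LinearOrder α] [IsOrderedAddMonoid α]
    {a b : α} (ha : 0 ≤ a) (hb : 0 ≤ b) : (a - b)⁻ ≤ b := by
  rw [← posPart_neg, neg_sub]
  exact posPart_sub_le_left hb ha

lemma le_sqrt_div_one_sub_sqrt_mul {η a b : ℝ} (hη0 : 0 ≤ η) (hη1 : η < 1) (ha : 0 ≤ a)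
    (h : (1 - η) * a ≤ √η * b) : a ≤ √η / (1 - √η) * b := by
  have hsq : √η ^ 2 = η := Real.sq_sqrt hη0
  have hsqrt0 : 0 ≤ √η := Real.sqrt_nonneg η
  have hsqrt1 : √η < 1 := by nlinarith
  have hle : η ≤ √η := by nlinarith
  rw [div_mul_eq_mul_div, le_div_iff₀ (by linarith)]
  nlinarith

/-- If `d_TV(P₁,P₂) = η < 1` then
`‖E_{P₁}X − E_{P₂}X‖₂ ≤ (√η/(1−√η)) (‖Σ_{P₁}‖₂^{1/2} + ‖Σ_{P₂}‖₂^{1/2})`. -/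
theorem mean_difference_tv_bound {m d r : ℕ}
    (P₁ P₂ : Fin m → ℝ) (X : Fin m → Matrix (Fin d) (Fin r) ℝ)
    (hP₁ : ∀ i, 0 ≤ P₁ i) (hP₂ : ∀ i, 0 ≤ P₂ i)
    (hP₁sum : ∑ i, P₁ i = 1) (hP₂sum : ∑ i, P₂ i = 1)
    (η : ℝ) (hη : (1 / 2 : ℝ) * ∑ i, |P₁ i - P₂ i| = η) (hη1 : η < 1) :
    spec (distMean P₁ X - distMean P₂ X)
      ≤ (Real.sqrt η / (1 - Real.sqrt η)) *
          (Real.sqrt (spec (distCov P₁ X)) + Real.sqrt (spec (distCov P₂ X))) := by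
  have hmass : ∑ i, P₁ i = ∑ i, P₂ i := hP₁sum.trans hP₂sum.symm
  have hpos : ∑ i, (P₁ i - P₂ i)⁺ = η := (sum_posPart_sub_eq_half_sum_abs _ hmass).trans hη
  have hneg : ∑ i, (P₁ i - P₂ i)⁻ = η := (sum_posPart_sub_eq_sum_negPart_sub _ hmass) ▸ hpos
  have hB₁ : ‖∑ i, (P₁ i - P₂ i)⁺ • (X i - distMean P₁ X)‖ ≤ √η * √‖distCov P₁ X‖ :=
    hpos ▸ l2_opNorm_sum_smul_le_sqrt_mul_sqrt univ (fun i _ => posPart_nonneg _)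
      (fun i _ => posPart_sub_le_left (hP₁ i) (hP₂ i)) _
  have hB₂ : ‖∑ i, (P₁ i - P₂ i)⁻ • (X i - distMean P₂ X)‖ ≤ √η * √‖distCov P₂ X‖ :=
    hneg ▸ l2_opNorm_sum_smul_le_sqrt_mul_sqrt univ (fun i _ => negPart_nonneg _)
      (fun i _ => negPart_sub_le_right (hP₁ i) (hP₂ i)) _
  simp only [spec_eq_l2_opNorm]
  refine le_sqrt_div_one_sub_sqrt_mul (hη ▸ by positivity) hη1 (norm_nonneg _) ?_
  calc (1 - η) * ‖distMean P₁ X - distMean P₂ X‖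
      = ‖∑ i, (P₁ i - P₂ i)⁺ • (X i - distMean P₁ X)
          - ∑ i, (P₁ i - P₂ i)⁻ • (X i - distMean P₂ X)‖ := by
        rw [distMean, distMean, sum_posPart_smul_sub_mean_sub_sum_negPart_smul_sub_mean _ hmass,
          hpos, norm_smul, Real.norm_of_nonneg (by linarith)]
    _ ≤ √η * √‖distCov P₁ X‖ + √η * √‖distCov P₂ X‖ := (norm_sub_le _ _).trans (add_le_add hB₁ hB₂)
    _ = √η * (√‖distCov P₁ X‖ + √‖distCov P₂ X‖) := by ring
end

section
/- Let G ⊆ S ⊆ [m] be finite index sets, with data X_i ∈ ℝ^{d×r}, empirical means μ_G, μ_S and empirical covariances Σ_G, Σ_S (defined with vectorized outer products projected along a unit vector v ∈ ℝ^d). Let v be the leading eigenvector of Σ_S and define outlier scores τ_i = ⟨v, (X_i − μ_S)(X_i − μ_S)ᵀ v⟩ for i ∈ S. Let η = 1 − |G|/|S| and fix γ ∈ (0, 1/η). If ‖Σ_S‖₂ ≥ (1 − η)² (γ/(1 − γη)) ‖Σ_G‖₂, then Σ_{j∈G} τ_j ≤ (1/γ) Σ_{i∈S} τ_i. -/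
/-!
Project the centred samples along `v`: `w i = vᵀ (X i - μ_S)`, so that `τ i = ‖w i‖²`, the `w i`
sum to zero over `S`, and `∑_S τ = |S| ‖Σ_S‖` because `v` is a unit eigenvector for `‖Σ_S‖`.
On `G`, `w j` is its `G`-centred part, of squared mass `|G| vᵀ Σ_G v ≤ |G| ‖Σ_G‖`, plus the
common shift `c = vᵀ (μ_G - μ_S)`. The points of `S \ G` must cancel the total shift `|G| c`, and
by Cauchy–Schwarz this costs them squared mass at least `|G|² ‖c‖² / |S \ G|`. Hence
`|S| ∑_G τ ≤ |G|² ‖Σ_G‖ + (|S| - |G|) ∑_S τ`, which the lower bound on `‖Σ_S‖` turns into the claim.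
-/

open Matrix Finset

/-- Empirical mean of matrix-valued samples over a finite index set. -/
noncomputable def empMean {ι : Type*} {d r : ℕ} (X : ι → Matrix (Fin d) (Fin r) ℝ)
    (S : Finset ι) : Matrix (Fin d) (Fin r) ℝ :=
  ((S.card : ℝ)⁻¹) • ∑ i ∈ S, X i

/-- Empirical covariance of matrix-valued samples over a finite index set. -/
noncomputable def empCov {ι : Type*} {d r : ℕ} (X : ι → Matrix (Fin d) (Fin r) ℝ)
    (S : Finset ι) : Matrix (Fin d) (Fin d) ℝ :=
  ((S.card : ℝ)⁻¹) • ∑ i ∈ S, (X i - empMean X S) * (X i - empMean X S)ᵀ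

section Filtering

variable {ι E : Type*} [SeminormedAddCommGroup E]

theorem norm_sum_sq_le_card_mul_sum_norm_sq (s : Finset ι) (f : ι → E) :
    ‖∑ i ∈ s, f i‖ ^ 2 ≤ #s * ∑ i ∈ s, ‖f i‖ ^ 2 :=
  (pow_le_pow_left₀ (norm_nonneg _) (norm_sum_le s f) 2).trans sq_sum_le_card_mul_sum_sq

variable [InnerProductSpace ℝ E] {G S : Finset ι} {w : ι → E} {c : E}

theorem sum_norm_sq_eq_sum_norm_sub_sq_add (hG : ∑ j ∈ G, (w j - c) = 0) :
    ∑ j ∈ G, ‖w j‖ ^ 2 = ∑ j ∈ G, ‖w j - c‖ ^ 2 + #G * ‖c‖ ^ 2 := by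
  have hcross : ∑ j ∈ G, inner ℝ (w j - c) c = 0 := by
    rw [← sum_inner, hG, inner_zero_left]
  calc ∑ j ∈ G, ‖w j‖ ^ 2 = ∑ j ∈ G, (‖w j - c‖ ^ 2 + 2 * inner ℝ (w j - c) c + ‖c‖ ^ 2) := by
        refine sum_congr rfl fun j _ => ?_
        rw [← norm_add_sq_real, sub_add_cancel]
    _ = ∑ j ∈ G, ‖w j - c‖ ^ 2 + #G * ‖c‖ ^ 2 := by
        rw [sum_add_distrib, sum_add_distrib, ← mul_sum, hcross, sum_const, nsmul_eq_mul]
        ring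

theorem card_mul_sum_norm_sq_le (hGS : G ⊆ S) (hS : ∑ i ∈ S, w i = 0)
    (hG : ∑ j ∈ G, (w j - c) = 0) :
    #S * ∑ j ∈ G, ‖w j‖ ^ 2 ≤
      #G * ∑ j ∈ G, ‖w j - c‖ ^ 2 + (#S - #G) * ∑ i ∈ S, ‖w i‖ ^ 2 := by
  classical
  have hsumG : ∑ j ∈ G, w j = (#G : ℝ) • c := by
    rw [← sub_eq_zero, ← hG, sum_sub_distrib, sum_const, Nat.cast_smul_eq_nsmul]
  have hsumB : ∑ i ∈ S \ G, w i = -((#G : ℝ) • c) := by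
    rw [← hsumG, eq_neg_iff_add_eq_zero, sum_sdiff hGS, hS]
  have hcardB : (#(S \ G) : ℝ) = #S - #G := by
    rw [card_sdiff_of_subset hGS, Nat.cast_sub (card_le_card hGS)]
  have hmassB : ∑ i ∈ S \ G, ‖w i‖ ^ 2 = ∑ i ∈ S, ‖w i‖ ^ 2 - ∑ j ∈ G, ‖w j‖ ^ 2 := by
    rw [eq_sub_iff_add_eq, sum_sdiff hGS]
  have hCS : (#G : ℝ) ^ 2 * ‖c‖ ^ 2 ≤
      (#S - #G) * (∑ i ∈ S, ‖w i‖ ^ 2 - ∑ j ∈ G, ‖w j‖ ^ 2) := by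
    have := norm_sum_sq_le_card_mul_sum_norm_sq (S \ G) w
    rwa [hsumB, norm_neg, norm_smul, Real.norm_natCast, mul_pow, hcardB, hmassB] at this
  have hG0 : (0 : ℝ) ≤ #G := Nat.cast_nonneg _
  rw [sum_norm_sq_eq_sum_norm_sub_sq_add hG] at hCS ⊢
  nlinarith

end Filtering

section Projection

variable {m n : Type*} [Fintype m]

noncomputable def euclideanVecMul (v : m → ℝ) : Matrix m n ℝ →ₗ[ℝ] EuclideanSpace ℝ n :=
  (WithLp.linearEquiv 2 ℝ (n → ℝ)).symm.toLinearMap ∘ₗ vecMulBilin ℝ ℝ v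

variable [Fintype n]

theorem dotProduct_mul_transpose_mulVec (v : m → ℝ) (M : Matrix m n ℝ) :
    v ⬝ᵥ ((M * Mᵀ) *ᵥ v) = ‖euclideanVecMul v M‖ ^ 2 := by
  rw [← real_inner_self_eq_norm_sq, ← mulVec_mulVec, dotProduct_mulVec, mulVec_transpose]
  exact (EuclideanSpace.inner_toLp_toLp _ _).symm

end Projection

theorem sum_sub_empMean {ι : Type*} {d r : ℕ} (X : ι → Matrix (Fin d) (Fin r) ℝ)
    {T : Finset ι} (hT : T.Nonempty) : ∑ i ∈ T, (X i - empMean X T) = 0 := by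
  rw [sum_sub_distrib, sum_const, empMean, ← Nat.cast_smul_eq_nsmul ℝ, smul_smul,
    mul_inv_cancel₀ (by exact_mod_cast hT.card_pos.ne'), one_smul, sub_self]

theorem sum_norm_sq_euclideanVecMul_sub_empMean {ι : Type*} {d r : ℕ}
    (X : ι → Matrix (Fin d) (Fin r) ℝ) (T : Finset ι) (v : Fin d → ℝ) :
    ∑ i ∈ T, ‖euclideanVecMul v (X i - empMean X T)‖ ^ 2 = #T * (v ⬝ᵥ (empCov X T *ᵥ v)) := by
  rcases T.eq_empty_or_nonempty with rfl | hT
  · simp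
  simp only [empCov, smul_mulVec, dotProduct_smul, sum_mulVec, dotProduct_sum,
    dotProduct_mul_transpose_mulVec, smul_eq_mul]
  rw [mul_inv_cancel_left₀ (by exact_mod_cast hT.card_pos.ne')]

theorem dotProduct_mulVec_le_spec {d : ℕ} (M : Matrix (Fin d) (Fin d) ℝ) {v : Fin d → ℝ}
    (hv : ∑ j, v j ^ 2 = 1) : v ⬝ᵥ (M *ᵥ v) ≤ spec M := by
  set T := LinearMap.toContinuousLinearMap (toEuclideanLin M)
  have hnorm : ‖WithLp.toLp 2 v‖ ^ 2 = 1 := by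
    rw [EuclideanSpace.real_norm_sq_eq]
    exact hv
  have hrayleigh : v ⬝ᵥ (M *ᵥ v) = T.rayleighQuotient (WithLp.toLp 2 v) := by
    rw [ContinuousLinearMap.rayleighQuotient, hnorm, div_one,
      ContinuousLinearMap.reApplyInnerSelf_apply]
    simp only [T, LinearMap.coe_toContinuousLinearMap', toLpLin_toLp, toLin'_apply,
      EuclideanSpace.inner_toLp_toLp, star_trivial, RCLike.re_to_real]
  rw [hrayleigh]
  exact (le_abs_self _).trans (T.rayleighQuotient_le_norm _)

theorem le_one_div_mul_of_card_mul_le {n g A V σ lam η γ : ℝ} (hn : 0 < n) (hg : 0 ≤ g)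
    (hη : η = 1 - g / n) (hγ0 : 0 < γ) (hγη : γ * η < 1)
    (hfilter : n * A ≤ g * V + (n - g) * (n * lam)) (hV : V ≤ g * σ)
    (hbig : (1 - η) ^ 2 * (γ / (1 - γ * η)) * σ ≤ lam) :
    A ≤ 1 / γ * (n * lam) := by
  have hρ : 0 < 1 - γ * η := by linarith
  have hweights : n - g = η * n := by rw [hη]; field_simp
  have hσ : γ * (g ^ 2 * σ) ≤ (1 - γ * η) * (n ^ 2 * lam) := by
    rw [show 1 - η = g / n by rw [hη]; ring] at hbig
    calc γ * (g ^ 2 * σ) = (1 - γ * η) * n ^ 2 * ((g / n) ^ 2 * (γ / (1 - γ * η)) * σ) := by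
          field_simp
      _ ≤ (1 - γ * η) * (n ^ 2 * lam) := by
          rw [mul_assoc]
          gcongr
  have hγg : 0 ≤ γ * g := by positivity
  have hscaled : γ * (n * A) ≤ n * (n * lam) := by
    rw [hweights] at hfilter
    nlinarith [mul_le_mul_of_nonneg_left hfilter hγ0.le, mul_le_mul_of_nonneg_left hV hγg, hσ]
  rw [one_div, inv_mul_eq_div, le_div_iff₀ hγ0]
  nlinarith

/-- If the full-sample covariance is large relative to the good-set covariance, then the
good points carry at most a `1/γ` fraction of the total outlier scores along the leading
eigendirection `v` of `Σ_S`. -/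
theorem scores_on_good_set_larger {ι : Type*} {d r : ℕ}
    (X : ι → Matrix (Fin d) (Fin r) ℝ) (S G : Finset ι)
    (hsub : G ⊆ S) (hG : G.Nonempty) (hS : S.Nonempty)
    (v : Fin d → ℝ) (hv : ∑ j, v j ^ 2 = 1)
    (hvEig : empCov X S *ᵥ v = spec (empCov X S) • v)
    (τ : ι → ℝ)
    (hτ : ∀ i ∈ S, τ i = v ⬝ᵥ (((X i - empMean X S) * (X i - empMean X S)ᵀ) *ᵥ v))
    (η γ : ℝ) (hη : η = 1 - (G.card : ℝ) / S.card)
    (hγ0 : 0 < γ) (hγη : γ * η < 1)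
    (hbig : (1 - η) ^ 2 * (γ / (1 - γ * η)) * spec (empCov X G) ≤ spec (empCov X S)) :
    ∑ j ∈ G, τ j ≤ (1 / γ) * ∑ i ∈ S, τ i := by
  set L := euclideanVecMul (n := Fin r) v
  set w := fun i => L (X i - empMean X S)
  set c := L (empMean X G - empMean X S)
  have hτw : ∀ i ∈ S, τ i = ‖w i‖ ^ 2 := fun i hi => by
    rw [hτ i hi, dotProduct_mul_transpose_mulVec]
  have hgood : ∀ j, w j - c = L (X j - empMean X G) := fun j => by
    rw [← map_sub, sub_sub_sub_cancel_right]
  have hvv : v ⬝ᵥ v = 1 := by simpa [dotProduct, sq] using hv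
  have htotal : ∑ i ∈ S, ‖w i‖ ^ 2 = #S * spec (empCov X S) := by
    rw [sum_norm_sq_euclideanVecMul_sub_empMean, hvEig, dotProduct_smul, hvv, smul_eq_mul, mul_one]
  have hspread : ∑ j ∈ G, ‖w j - c‖ ^ 2 ≤ #G * spec (empCov X G) := by
    simp only [hgood]
    rw [sum_norm_sq_euclideanVecMul_sub_empMean]
    exact mul_le_mul_of_nonneg_left (dotProduct_mulVec_le_spec _ hv) (Nat.cast_nonneg _)
  have hfilter := card_mul_sum_norm_sq_le (w := w) (c := c) hsub
    (by rw [← map_sum, sum_sub_empMean X hS, map_zero])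
    (by simp only [hgood]; rw [← map_sum, sum_sub_empMean X hG, map_zero])
  rw [sum_congr rfl fun j hj => hτw j (hsub hj), sum_congr rfl hτw, htotal]
  rw [htotal] at hfilter
  exact le_one_div_mul_of_card_mul_le (by exact_mod_cast hS.card_pos) (Nat.cast_nonneg _) hη hγ0 hγη hfilter hspread hbig
end

section
/- Let X be a set with a function dist: X × X → ℝ satisfying the triangle inequality and symmetry, let θ* ∈ X, and let Λ = {2^j : j_lo ≤ j ≤ j_hi} be a finite geometric grid. Suppose f: Λ → ℝ≥0 is monotone increasing and for each λ ∈ Λ we have an estimate θ_λ ∈ X. Assume there is λ_crit ∈ Λ such that dist(θ_λ, θ*) ≤ f(λ) for all λ ∈ Λ with λ ≥ λ_crit. Define λ̂ := min{λ ∈ Λ : dist(θ_λ, θ_{λ'}) ≤ f(λ) + f(λ') for all λ' ∈ Λ with λ' ≥ λ}. Then λ̂ ≤ λ_crit and dist(θ_{λ̂}, θ*) ≤ 3 f(λ_crit). -/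
section Lepski

variable {X ι : Type*} [Preorder ι] (dst : X → X → ℝ) (s : Set ι) (f : ι → ℝ) (θ : ι → X)

def IsConsistentScale (lam : ι) : Prop :=
  ∀ lam' ∈ s, lam ≤ lam' → dst (θ lam) (θ lam') ≤ f lam + f lam'

variable {dst s f θ}

theorem isConsistentScale_of_accurate (hsymm : ∀ a b, dst a b = dst b a)
    (htri : ∀ a b c, dst a c ≤ dst a b + dst b c) {θstar : X} {lamcrit : ι}
    (hcrit : lamcrit ∈ s) (hacc : ∀ lam ∈ s, lamcrit ≤ lam → dst (θ lam) θstar ≤ f lam) :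
    IsConsistentScale dst s f θ lamcrit := by
  intro lam' hlam' hle
  calc dst (θ lamcrit) (θ lam') ≤ dst (θ lamcrit) θstar + dst (θ lam') θstar := by
        simpa only [hsymm θstar] using htri (θ lamcrit) θstar (θ lam')
    _ ≤ f lamcrit + f lam' := add_le_add (hacc lamcrit hcrit le_rfl) (hacc lam' hlam' hle)

theorem dst_le_three_mul_of_isConsistentScale (htri : ∀ a b c, dst a c ≤ dst a b + dst b c)
    {θstar : X} {lamhat lamcrit : ι} (hhat : IsConsistentScale dst s f θ lamhat)
    (hcrit : lamcrit ∈ s) (hle : lamhat ≤ lamcrit) (hf : f lamhat ≤ f lamcrit)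
    (hacc : dst (θ lamcrit) θstar ≤ f lamcrit) :
    dst (θ lamhat) θstar ≤ 3 * f lamcrit :=
  calc dst (θ lamhat) θstar ≤ dst (θ lamhat) (θ lamcrit) + dst (θ lamcrit) θstar :=
        htri _ _ _
    _ ≤ (f lamhat + f lamcrit) + f lamcrit := add_le_add (hhat lamcrit hcrit hle) hacc
    _ ≤ 3 * f lamcrit := by linarith

end Lepski

theorem lepski_adaptation_general {X : Type*} (dst : X → X → ℝ)
    (hsymm : ∀ a b, dst a b = dst b a)
    (htri : ∀ a b c, dst a c ≤ dst a b + dst b c)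
    (Lam : Finset ℝ)
    (f : ℝ → ℝ)
    (hfmono : ∀ lam ∈ Lam, ∀ lam' ∈ Lam, lam ≤ lam' → f lam ≤ f lam')
    (θ : ℝ → X) (θstar : X)
    (lamcrit : ℝ) (hcrit : lamcrit ∈ Lam)
    (hacc : ∀ lam ∈ Lam, lamcrit ≤ lam → dst (θ lam) θstar ≤ f lam)
    (lamhat : ℝ) (hhatmem : lamhat ∈ Lam)
    (hhatcons : ∀ lam' ∈ Lam, lamhat ≤ lam' → dst (θ lamhat) (θ lam') ≤ f lamhat + f lam')
    (hhatmin : ∀ lam ∈ Lam,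
      (∀ lam' ∈ Lam, lam ≤ lam' → dst (θ lam) (θ lam') ≤ f lam + f lam') → lamhat ≤ lam) :
    lamhat ≤ lamcrit ∧ dst (θ lamhat) θstar ≤ 3 * f lamcrit := by
  have hle : lamhat ≤ lamcrit :=
    hhatmin lamcrit hcrit <| isConsistentScale_of_accurate (s := (Lam : Set ℝ)) (f := f) (θ := θ)
      hsymm htri hcrit hacc
  exact ⟨hle, dst_le_three_mul_of_isConsistentScale (s := (Lam : Set ℝ)) htri hhatcons hcrit hle
    (hfmono lamhat hhatmem lamcrit hcrit hle) (hacc lamcrit hcrit le_rfl)⟩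

/-- Abstract Lepski-type adaptation argument: if all estimates at scales above `lamcrit`
are `f`-accurate, the smallest scale pairwise-consistent with all larger scales is at most
`lamcrit` and its estimate is within `3 f(lamcrit)` of the truth. -/
theorem lepski_adaptation {X : Type*} (dst : X → X → ℝ)
    (hsymm : ∀ a b, dst a b = dst b a)
    (htri : ∀ a b c, dst a c ≤ dst a b + dst b c)
    (jlo jhi : ℤ) (Lam : Finset ℝ)
    (hLam : Lam = (Finset.Icc jlo jhi).image (fun j => (2 : ℝ) ^ j))
    (f : ℝ → ℝ) (hf0 : ∀ lam ∈ Lam, 0 ≤ f lam)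
    (hfmono : ∀ lam ∈ Lam, ∀ lam' ∈ Lam, lam ≤ lam' → f lam ≤ f lam')
    (θ : ℝ → X) (θstar : X)
    (lamcrit : ℝ) (hcrit : lamcrit ∈ Lam)
    (hacc : ∀ lam ∈ Lam, lamcrit ≤ lam → dst (θ lam) θstar ≤ f lam)
    (lamhat : ℝ) (hhatmem : lamhat ∈ Lam)
    (hhatcons : ∀ lam' ∈ Lam, lamhat ≤ lam' → dst (θ lamhat) (θ lam') ≤ f lamhat + f lam')
    (hhatmin : ∀ lam ∈ Lam,
      (∀ lam' ∈ Lam, lam ≤ lam' → dst (θ lam) (θ lam') ≤ f lam + f lam') → lamhat ≤ lam) :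
    lamhat ≤ lamcrit ∧ dst (θ lamhat) θstar ≤ 3 * f lamcrit :=
  lepski_adaptation_general dst hsymm htri Lam f hfmono θ θstar lamcrit hcrit hacc lamhat hhatmem
    hhatcons hhatmin
end
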